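/- Let A be a real symmetric positive definite n × n matrix with spectral decomposition A = U D Uᵀ, where U is an orthogonal matrix and D is the diagonal matrix of (positive) eigenvalues λ₁, …, λₙ. Then for every β ∈ (0,1), the entrywise Bochner integral (sin(πβ)/π) · ∫₀^∞ s^(−β) · (A + s·I)^(−1) ds equals U D^(−β) Uᵀ, where D^(−β) is the diagonal matrix with entries λᵢ^(−β); that is, the Balakrishnan integral computes the negative fractional power A^(−β) of A. -/

import Mathlib

/-!
Since `A + s • 1 = U (D + s) Uᵀ`, each entry of the integral is a combination of the scalar
integrals `∫₀^∞ s^(-β) (λ + s)⁻¹ ds`. Scaling `s = λ t` reduces these to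
`λ^(-β) ∫₀^∞ t^(-β) (1 + t)⁻¹ dt`, and the substitution `t = x / (1 - x)` turns the last integral
into the Beta integral `B(1 - β, β) = Γ(1 - β) Γ(β)`, which is `π / sin (π β)` by Euler's
reflection formula.
-/

open Real MeasureTheory Matrix
open Set

section BetaIntegral

lemma ofReal_cpow_mul_one_sub_cpow {a b x : ℝ} (hx : x ∈ Icc (0 : ℝ) 1) :
    (x : ℂ) ^ ((a : ℂ) - 1) * (1 - (x : ℂ)) ^ ((b : ℂ) - 1) =
      ((x ^ (a - 1) * (1 - x) ^ (b - 1) : ℝ) : ℂ) := by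
  rw [Complex.ofReal_mul, Complex.ofReal_cpow hx.1, Complex.ofReal_cpow (sub_nonneg.2 hx.2)]
  push_cast
  rfl

lemma integrableOn_rpow_mul_one_sub_rpow {a b : ℝ} (ha : 0 < a) (hb : 0 < b) :
    IntegrableOn (fun x : ℝ => x ^ (a - 1) * (1 - x) ^ (b - 1)) (Ioo 0 1) := by
  have hC := ((Complex.betaIntegral_convergent (u := a) (v := b) (by simpa) (by simpa)).1.mono_set
    Ioo_subset_Ioc_self).congr_fun
      (fun x hx => ofReal_cpow_mul_one_sub_cpow (Ioo_subset_Icc_self hx)) measurableSet_Ioo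
  simpa [IntegrableOn] using hC.re

lemma integral_rpow_mul_one_sub_rpow {a b : ℝ} (ha : 0 < a) (hb : 0 < b) :
    ∫ x in Ioo (0 : ℝ) 1, x ^ (a - 1) * (1 - x) ^ (b - 1) =
      Gamma a * Gamma b / Gamma (a + b) := by
  have h := Complex.betaIntegral_eq_Gamma_mul_div a b (by simpa) (by simpa)
  rw [Complex.betaIntegral, intervalIntegral.integral_of_le zero_le_one,
    integral_Ioc_eq_integral_Ioo, setIntegral_congr_fun measurableSet_Ioo
      (fun x hx => ofReal_cpow_mul_one_sub_cpow (Ioo_subset_Icc_self hx)), integral_complex_ofReal,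
    ← Complex.ofReal_add, Complex.Gamma_ofReal, Complex.Gamma_ofReal, Complex.Gamma_ofReal] at h
  exact_mod_cast h

end BetaIntegral

section DivOneSub

lemma hasDerivAt_div_one_sub {x : ℝ} (hx : x ≠ 1) :
    HasDerivAt (fun x => x / (1 - x)) ((1 - x) ^ 2)⁻¹ x := by
  have h1x : 1 - x ≠ 0 := sub_ne_zero.2 (Ne.symm hx)
  refine ((hasDerivAt_id' x).div ((hasDerivAt_id' x).const_sub 1) h1x).congr_deriv ?_
  field_simp
  ring

lemma monotoneOn_div_one_sub : MonotoneOn (fun x : ℝ => x / (1 - x)) (Ioo 0 1) :=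
  fun _ _ _ hy hxy =>
    div_le_div₀ hy.1.le hxy (sub_pos.2 hy.2) (by linarith)

lemma image_div_one_sub_Ioo : (fun x : ℝ => x / (1 - x)) '' Ioo 0 1 = Ioi 0 := by
  ext t
  constructor
  · rintro ⟨x, hx, rfl⟩
    exact div_pos hx.1 (sub_pos.2 hx.2)
  · intro ht
    have ht : 0 < t := ht
    refine ⟨t / (1 + t), ⟨by positivity, (div_lt_one (by positivity)).2 (by linarith)⟩, ?_⟩
    field_simp
    ring

lemma hasDerivWithinAt_div_one_sub_Ioo :
    ∀ x ∈ Ioo (0 : ℝ) 1, HasDerivWithinAt (fun x => x / (1 - x)) ((1 - x) ^ 2)⁻¹ (Ioo 0 1) x :=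
  fun _ hx => (hasDerivAt_div_one_sub hx.2.ne).hasDerivWithinAt

variable {E : Type*} [NormedAddCommGroup E] [NormedSpace ℝ E]

lemma integrableOn_Ioi_iff_integrableOn_div_one_sub (g : ℝ → E) :
    IntegrableOn g (Ioi 0) ↔
      IntegrableOn (fun x => ((1 - x) ^ 2)⁻¹ • g (x / (1 - x))) (Ioo 0 1) := by
  rw [← image_div_one_sub_Ioo]
  exact integrableOn_image_iff_integrableOn_deriv_smul_of_monotoneOn measurableSet_Ioo
    hasDerivWithinAt_div_one_sub_Ioo monotoneOn_div_one_sub g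

lemma integral_Ioi_eq_integral_div_one_sub (g : ℝ → E) :
    ∫ t in Ioi 0, g t = ∫ x in Ioo 0 1, ((1 - x) ^ 2)⁻¹ • g (x / (1 - x)) := by
  rw [← image_div_one_sub_Ioo]
  exact integral_image_eq_integral_deriv_smul_of_monotoneOn measurableSet_Ioo
    hasDerivWithinAt_div_one_sub_Ioo monotoneOn_div_one_sub g

end DivOneSub

section BetaIntegralIoi

variable {a b : ℝ}

lemma inv_sq_one_sub_smul_rpow_div_one_sub {x : ℝ} (hx : x ∈ Ioo (0 : ℝ) 1) :
    ((1 - x) ^ 2)⁻¹ • ((x / (1 - x)) ^ (a - 1) * (1 + x / (1 - x)) ^ (-(a + b))) =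
      x ^ (a - 1) * (1 - x) ^ (b - 1) := by
  have h1x : 0 < 1 - x := sub_pos.2 hx.2
  have hsum : 1 + x / (1 - x) = (1 - x)⁻¹ := by field_simp; ring
  have hpow : (1 - x) ^ (b - 1) * (1 - x) ^ (a - 1) * (1 - x) ^ 2 = (1 - x) ^ (a + b) := by
    rw [← rpow_add h1x, ← rpow_natCast, ← rpow_add h1x]
    congr 1
    push_cast
    ring
  rw [hsum, smul_eq_mul, div_rpow hx.1.le h1x.le, inv_rpow h1x.le, rpow_neg h1x.le, inv_inv, ← hpow]
  field_simp

lemma integrableOn_rpow_mul_one_add_rpow_neg (ha : 0 < a) (hb : 0 < b) :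
    IntegrableOn (fun t : ℝ => t ^ (a - 1) * (1 + t) ^ (-(a + b))) (Ioi 0) := by
  rw [integrableOn_Ioi_iff_integrableOn_div_one_sub]
  exact (integrableOn_rpow_mul_one_sub_rpow ha hb).congr_fun
    (fun x hx => (inv_sq_one_sub_smul_rpow_div_one_sub hx).symm) measurableSet_Ioo

lemma integral_rpow_mul_one_add_rpow_neg (ha : 0 < a) (hb : 0 < b) :
    ∫ t in Ioi (0 : ℝ), t ^ (a - 1) * (1 + t) ^ (-(a + b)) =
      Gamma a * Gamma b / Gamma (a + b) := by
  rw [integral_Ioi_eq_integral_div_one_sub, setIntegral_congr_fun measurableSet_Ioo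
    (fun x hx => inv_sq_one_sub_smul_rpow_div_one_sub hx), integral_rpow_mul_one_sub_rpow ha hb]

end BetaIntegralIoi

section Balakrishnan

variable {β c : ℝ}

lemma integrableOn_rpow_neg_mul_one_add_inv (hβ0 : 0 < β) (hβ1 : β < 1) :
    IntegrableOn (fun t : ℝ => t ^ (-β) * (1 + t)⁻¹) (Ioi 0) := by
  simpa only [sub_sub_cancel_left, sub_add_cancel, rpow_neg_one] using
    integrableOn_rpow_mul_one_add_rpow_neg (sub_pos.2 hβ1) hβ0

lemma integral_rpow_neg_mul_one_add_inv (hβ0 : 0 < β) (hβ1 : β < 1) :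
    ∫ t in Ioi (0 : ℝ), t ^ (-β) * (1 + t)⁻¹ = π / sin (π * β) := by
  have h := integral_rpow_mul_one_add_rpow_neg (sub_pos.2 hβ1) hβ0
  simp only [sub_sub_cancel_left, sub_add_cancel, rpow_neg_one] at h
  rw [h, Gamma_one, div_one, mul_comm, Gamma_mul_Gamma_one_sub]

lemma rpow_neg_mul_add_inv_mul {t : ℝ} (hc : 0 < c) (ht : 0 ≤ t) :
    (c * t) ^ (-β) * (c + c * t)⁻¹ = c ^ (-β) * c⁻¹ * (t ^ (-β) * (1 + t)⁻¹) := by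
  rw [mul_rpow hc.le ht, ← mul_one_add, mul_inv]
  ring

lemma integrableOn_rpow_neg_mul_add_inv (hβ0 : 0 < β) (hβ1 : β < 1) (hc : 0 < c) :
    IntegrableOn (fun s : ℝ => s ^ (-β) * (c + s)⁻¹) (Ioi 0) := by
  have h : IntegrableOn (fun t : ℝ => c ^ (-β) * c⁻¹ * (t ^ (-β) * (1 + t)⁻¹)) (Ioi 0) :=
    (integrableOn_rpow_neg_mul_one_add_inv hβ0 hβ1).const_mul _
  rw [← mul_zero c, ← integrableOn_Ioi_comp_mul_left_iff _ 0 hc]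
  exact h.congr_fun (fun t ht => (rpow_neg_mul_add_inv_mul hc (le_of_lt ht)).symm)
    measurableSet_Ioi

lemma sin_div_pi_mul_integral_rpow_neg_mul_add_inv (hβ0 : 0 < β) (hβ1 : β < 1) (hc : 0 < c) :
    sin (π * β) / π * ∫ s in Ioi (0 : ℝ), s ^ (-β) * (c + s)⁻¹ = c ^ (-β) := by
  have hsin : 0 < sin (π * β) :=
    sin_pos_of_pos_of_lt_pi (by positivity) (by nlinarith [pi_pos])
  have hscale := integral_comp_mul_left_Ioi (fun s : ℝ => s ^ (-β) * (c + s)⁻¹) 0 hc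
  rw [mul_zero, setIntegral_congr_fun measurableSet_Ioi
    (fun t ht => rpow_neg_mul_add_inv_mul hc (le_of_lt ht)), integral_const_mul,
    integral_rpow_neg_mul_one_add_inv hβ0 hβ1, smul_eq_mul] at hscale
  rw [eq_inv_mul_iff_mul_eq₀ hc.ne'] at hscale
  rw [← hscale]
  field_simp

end Balakrishnan

section OrthogonalConj

variable {ι : Type*} [Fintype ι] [DecidableEq ι]

lemma conj_diagonal_apply {R : Type*} [NonUnitalNonAssocSemiring R] (U : Matrix ι ι R)
    (d : ι → R) (i j : ι) :
    (U * diagonal d * Uᵀ) i j = ∑ k, U i k * d k * U j k := by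
  rw [mul_apply]
  simp only [mul_diagonal, transpose_apply]

lemma conj_diagonal_add_smul_one {R : Type*} [CommSemiring R] {U : Matrix ι ι R}
    (hU : U * Uᵀ = 1) (d : ι → R) (s : R) :
    U * diagonal d * Uᵀ + s • 1 = U * diagonal (fun k => d k + s) * Uᵀ := by
  have hs : s • (1 : Matrix ι ι R) = U * Matrix.diagonal (fun _ => s) * Uᵀ := by
    rw [← smul_one_eq_diagonal, Matrix.mul_smul, Matrix.mul_one, Matrix.smul_mul, hU]
  rw [hs, ← Matrix.add_mul, ← Matrix.mul_add, diagonal_add]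

lemma inv_conj_of_mul_transpose_eq_one {R : Type*} [CommRing R] {U : Matrix ι ι R}
    (hU : U * Uᵀ = 1) (M : Matrix ι ι R) :
    (U * M * Uᵀ)⁻¹ = U * M⁻¹ * Uᵀ := by
  rw [Matrix.mul_inv_rev, Matrix.mul_inv_rev, inv_eq_right_inv hU, inv_eq_left_inv hU,
    Matrix.mul_assoc]

lemma inv_diagonal_of_ne_zero {K : Type*} [Field K] {d : ι → K} (hd : ∀ k, d k ≠ 0) :
    (diagonal d)⁻¹ = diagonal fun k => (d k)⁻¹ :=
  inv_eq_right_inv (by simp [diagonal_mul_diagonal, hd])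

end OrthogonalConj

theorem balakrishnan_matrix_fractional_power_general (n : ℕ)
    (A U : Matrix (Fin n) (Fin n) ℝ) (lam : Fin n → ℝ)
    (hU : U * Uᵀ = 1)
    (hlam : ∀ i, 0 < lam i)
    (hdecomp : A = U * Matrix.diagonal lam * Uᵀ)
    (β : ℝ) (hβ0 : 0 < β) (hβ1 : β < 1) :
    ∀ i j : Fin n,
      (Real.sin (Real.pi * β) / Real.pi) *
        ∫ s in Set.Ioi (0 : ℝ),
          s ^ (-β) * ((A + s • (1 : Matrix (Fin n) (Fin n) ℝ))⁻¹ i j) =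
      (U * Matrix.diagonal (fun i => lam i ^ (-β)) * Uᵀ) i j := by
  intro i j
  have hresolvent : ∀ s ∈ Ioi (0 : ℝ), (A + s • (1 : Matrix (Fin n) (Fin n) ℝ))⁻¹ =
      U * diagonal (fun k => (lam k + s)⁻¹) * Uᵀ := fun s hs => by
    rw [hdecomp, conj_diagonal_add_smul_one hU, inv_conj_of_mul_transpose_eq_one hU,
      inv_diagonal_of_ne_zero fun k => (add_pos (hlam k) hs).ne']
  have hentry : ∀ s ∈ Ioi (0 : ℝ), s ^ (-β) * (A + s • (1 : Matrix (Fin n) (Fin n) ℝ))⁻¹ i j =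
      ∑ k, U i k * U j k * (s ^ (-β) * (lam k + s)⁻¹) := fun s hs => by
    rw [hresolvent s hs, conj_diagonal_apply, Finset.mul_sum]
    exact Finset.sum_congr rfl fun k _ => by ring
  rw [setIntegral_congr_fun measurableSet_Ioi hentry, integral_finsetSum _ fun k _ =>
      (integrableOn_rpow_neg_mul_add_inv hβ0 hβ1 (hlam k)).const_mul _,
    conj_diagonal_apply, Finset.mul_sum]
  refine Finset.sum_congr rfl fun k _ => ?_
  rw [integral_const_mul, mul_left_comm,
    sin_div_pi_mul_integral_rpow_neg_mul_add_inv hβ0 hβ1 (hlam k)]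
  ring

theorem balakrishnan_matrix_fractional_power (n : ℕ)
    (A U : Matrix (Fin n) (Fin n) ℝ) (lam : Fin n → ℝ)
    (hA : A.PosDef) (hAsym : Aᵀ = A)
    (hU : U * Uᵀ = 1) (hUt : Uᵀ * U = 1)
    (hlam : ∀ i, 0 < lam i)
    (hdecomp : A = U * Matrix.diagonal lam * Uᵀ)
    (β : ℝ) (hβ0 : 0 < β) (hβ1 : β < 1) :
    ∀ i j : Fin n,
      (Real.sin (Real.pi * β) / Real.pi) *
        ∫ s in Set.Ioi (0 : ℝ),
          s ^ (-β) * ((A + s • (1 : Matrix (Fin n) (Fin n) ℝ))⁻¹ i j) =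
      (U * Matrix.diagonal (fun i => lam i ^ (-β)) * Uᵀ) i j :=
  balakrishnan_matrix_fractional_power_general n A U lam hU hlam hdecomp β hβ0 hβ1
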